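/- There exists a unique group homomorphism x ↦ θ_x from the lattice X into the group of units of the affine Hecke algebra H_Λ such that θ_x = N_x for all dominant x ∈ X^+. Explicitly, θ_x = N_y N_z^{-1} for any decomposition x = y − z with y, z ∈ X^+, and this is independent of the choice of decomposition. -/

import Mathlib

/-!
Since `N` is multiplicative on the monoid `X⁺`, whose elements pairwise commute, the units
`N_y` (`y ∈ X⁺`) pairwise commute. Hence `N_y N_z⁻¹` depends only on `y - z`: if
`y - z = y' - z'` then `y + z' = y' + z`, so `N_y N_{z'} = N_{y'} N_z`. Since every `x` is such a
difference, this defines `θ_x`, which is additive because all the factors commute. Any homomorphism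
agreeing with `N` on `X⁺` satisfies `θ_x N_z = θ_{x+z} = N_y`, so it is this one.
-/

namespace AddSubmonoid

variable {X K : Type*} [AddCommGroup X] [Group K] {P : AddSubmonoid X} {f : X → K}

theorem map_zero_eq_one_of_map_add (hf : ∀ x ∈ P, ∀ y ∈ P, f (x + y) = f x * f y) :
    f 0 = 1 := by
  have h := hf 0 P.zero_mem 0 P.zero_mem
  rwa [add_zero, left_eq_mul] at h

theorem commute_of_map_add (hf : ∀ x ∈ P, ∀ y ∈ P, f (x + y) = f x * f y)
    {x y : X} (hx : x ∈ P) (hy : y ∈ P) : Commute (f x) (f y) := by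
  rw [Commute, SemiconjBy, ← hf x hx y hy, ← hf y hy x hx, add_comm]

theorem mul_inv_eq_of_sub_eq (hf : ∀ x ∈ P, ∀ y ∈ P, f (x + y) = f x * f y)
    {y z y' z' : X} (hy : y ∈ P) (hz : z ∈ P) (hy' : y' ∈ P) (hz' : z' ∈ P)
    (h : y - z = y' - z') : f y * (f z)⁻¹ = f y' * (f z')⁻¹ := by
  have hcross : f y * f z' = f y' * f z := by
    rw [← hf y hy z' hz', ← hf y' hy' z hz, (sub_eq_sub_iff_add_eq_add).mp h]
  rw [eq_mul_inv_iff_mul_eq, mul_assoc, ← (commute_of_map_add hf hz' hz).inv_right.eq,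
    ← mul_assoc, hcross, mul_inv_cancel_right]

noncomputable def extendOfSub (hspan : ∀ x : X, ∃ y z : X, y ∈ P ∧ z ∈ P ∧ x = y - z)
    (f : X → K) (x : X) : K :=
  f (hspan x).choose * (f (hspan x).choose_spec.choose)⁻¹

variable (hspan : ∀ x : X, ∃ y z : X, y ∈ P ∧ z ∈ P ∧ x = y - z)
  (hf : ∀ x ∈ P, ∀ y ∈ P, f (x + y) = f x * f y)
include hspan hf

theorem extendOfSub_eq {x y z : X} (hy : y ∈ P) (hz : z ∈ P) (hx : x = y - z) :
    extendOfSub hspan f x = f y * (f z)⁻¹ := by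
  obtain ⟨hy₀, hz₀, hx₀⟩ := (hspan x).choose_spec.choose_spec
  exact mul_inv_eq_of_sub_eq hf hy₀ hz₀ hy hz (hx₀.symm.trans hx)

theorem extendOfSub_of_mem {x : X} (hx : x ∈ P) : extendOfSub hspan f x = f x := by
  rw [extendOfSub_eq hspan hf hx P.zero_mem (sub_zero x).symm,
    map_zero_eq_one_of_map_add hf, inv_one, mul_one]

theorem extendOfSub_add (x₁ x₂ : X) :
    extendOfSub hspan f (x₁ + x₂) = extendOfSub hspan f x₁ * extendOfSub hspan f x₂ := by
  obtain ⟨y₁, z₁, hy₁, hz₁, rfl⟩ := hspan x₁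
  obtain ⟨y₂, z₂, hy₂, hz₂, rfl⟩ := hspan x₂
  have hsum : y₁ - z₁ + (y₂ - z₂) = (y₁ + y₂) - (z₂ + z₁) := by abel
  rw [hsum, extendOfSub_eq hspan hf (P.add_mem hy₁ hy₂) (P.add_mem hz₂ hz₁) rfl,
    extendOfSub_eq hspan hf hy₁ hz₁ rfl, extendOfSub_eq hspan hf hy₂ hz₂ rfl,
    hf _ hy₁ _ hy₂, hf _ hz₂ _ hz₁, mul_inv_rev]
  simp only [mul_assoc, (commute_of_map_add hf hy₂ hz₁).inv_right.left_comm]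

theorem extendOfSub_unique {θ : X → K} (hθ : ∀ x y : X, θ (x + y) = θ x * θ y)
    (hθf : ∀ x ∈ P, θ x = f x) : θ = extendOfSub hspan f := by
  funext x
  obtain ⟨y, z, hy, hz, rfl⟩ := hspan x
  rw [extendOfSub_eq hspan hf hy hz rfl, eq_mul_inv_iff_mul_eq, ← hθf y hy, ← hθf z hz, ← hθ,
    sub_add_cancel]

end AddSubmonoid

open AddSubmonoid in
theorem stmt2_general {H X : Type*} [Ring H] [AddCommGroup X]
    (Xplus : AddSubmonoid X) (N : X → H)
    (hmul : ∀ x ∈ Xplus, ∀ y ∈ Xplus, N (x + y) = N x * N y)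
    (hunit : ∀ x ∈ Xplus, IsUnit (N x))
    (hspan : ∀ x : X, ∃ y z : X, y ∈ Xplus ∧ z ∈ Xplus ∧ x = y - z) :
    ∃ θ : X → Hˣ,
      ((∀ x y : X, θ (x + y) = θ x * θ y) ∧
       (∀ x ∈ Xplus, (θ x : H) = N x) ∧
       (∀ x y z : X, y ∈ Xplus → z ∈ Xplus → x = y - z → (θ x : H) * N z = N y)) ∧
      (∀ θ' : X → Hˣ,
        ((∀ x y : X, θ' (x + y) = θ' x * θ' y) ∧ (∀ x ∈ Xplus, (θ' x : H) = N x)) →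
          θ' = θ) := by
  classical
  set u : X → Hˣ := fun x => if h : x ∈ Xplus then (hunit x h).unit else 1
  have hu : ∀ x ∈ Xplus, (u x : H) = N x := fun x hx => by simp [u, hx]
  have hu_add : ∀ x ∈ Xplus, ∀ y ∈ Xplus, u (x + y) = u x * u y := fun x hx y hy =>
    Units.ext <| by rw [Units.val_mul, hu _ (Xplus.add_mem hx hy), hu x hx, hu y hy, hmul x hx y hy]
  refine ⟨extendOfSub hspan u,
    ⟨extendOfSub_add hspan hu_add, fun x hx => by rw [extendOfSub_of_mem hspan hu_add hx, hu x hx],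
      fun x y z hy hz hx => ?_⟩,
    fun θ' ⟨hθ'_add, hθ'N⟩ => extendOfSub_unique hspan hu_add hθ'_add
      fun x hx => Units.ext <| (hθ'N x hx).trans (hu x hx).symm⟩
  rw [← hu y hy, ← hu z hz, ← Units.val_mul, extendOfSub_eq hspan hu_add hy hz hx,
    inv_mul_cancel_right]

/-- There is a unique group homomorphism `x ↦ θ_x` from the lattice `X` into the units
of the affine Hecke algebra such that `θ_x = N_x` for all dominant `x ∈ X⁺`; explicitly
`θ_x = N_y N_z⁻¹` for any decomposition `x = y - z` with `y, z ∈ X⁺` (expressed here as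
`θ_x * N_z = N_y`), independently of the chosen decomposition. -/
theorem stmt2 {H X : Type*} [Ring H] [AddCommGroup X]
    (Xplus : AddSubmonoid X) (N : X → H)
    (hmul : ∀ x ∈ Xplus, ∀ y ∈ Xplus, N (x + y) = N x * N y)
    (hone : N 0 = 1)
    (hunit : ∀ x ∈ Xplus, IsUnit (N x))
    (hspan : ∀ x : X, ∃ y z : X, y ∈ Xplus ∧ z ∈ Xplus ∧ x = y - z) :
    ∃ θ : X → Hˣ,
      ((∀ x y : X, θ (x + y) = θ x * θ y) ∧
       (∀ x ∈ Xplus, (θ x : H) = N x) ∧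
       (∀ x y z : X, y ∈ Xplus → z ∈ Xplus → x = y - z → (θ x : H) * N z = N y)) ∧
      (∀ θ' : X → Hˣ,
        ((∀ x y : X, θ' (x + y) = θ' x * θ' y) ∧ (∀ x ∈ Xplus, (θ' x : H) = N x)) →
          θ' = θ) :=
  stmt2_general Xplus N hmul hunit hspan
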